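/- Let F ⊆ ℝⁿ be non-empty and compact, and suppose E is a simple tangent to F with focal point z ∈ F. Suppose Π_t : ℝⁿ → ℝⁿ is continuously differentiable on an open neighbourhood of z and its Jacobian derivative J_{z'}Π_t has rank m ≥ 1 for all z' in that neighbourhood. Then π_V(E) is a tangent to Π_t(F), where V = ker(J_z Π_t)^⊥ ∈ G(n,m) and π_V is the orthogonal projection onto V. -/

import Mathlib

open Metric MeasureTheory Filter Set
open scoped ENNReal NNReal Pointwise Topology

noncomputable section

/-- Euclidean space `ℝⁿ`. -/
abbrev Euc (n : ℕ) := EuclideanSpace ℝ (Fin n)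

/-- The image of a set under the orthogonal projection onto a subspace `V`. -/
def projSet {n : ℕ} (V : Submodule ℝ (Euc n)) (A : Set (Euc n)) : Set (Euc n) :=
  (fun x => (V.orthogonalProjectionOnto x : Euc n)) '' A

/-- One-sided (non-symmetric) Hausdorff distance `ρ_H(A,B) = sup_{a ∈ A} inf_{b ∈ B} |a-b|`. -/
def rhoH {X : Type*} [PseudoEMetricSpace X] (A B : Set X) : ℝ≥0∞ :=
  ⨆ a ∈ A, EMetric.infEdist a B

/-- `E` is a tangent to `F`: `E` is a non-empty closed subset of the closed unit ball and
there are maps `S_k` and constants `a_k, b_k > 0` with `sup_k b_k/a_k < ∞` such that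
`a_k |x-y| ≤ |S_k x - S_k y| ≤ b_k |x-y|` on `S_k⁻¹(B(0,1))` and `ρ_H(E, S_k(F)) → 0`. -/
def IsTangent {d : ℕ} (E F : Set (Euc d)) : Prop :=
  IsClosed E ∧ E.Nonempty ∧ E ⊆ closedBall 0 1 ∧
  ∃ S : ℕ → Euc d → Euc d, ∃ a b : ℕ → ℝ, ∃ M : ℝ,
    (∀ k, 0 < a k) ∧ (∀ k, 0 < b k) ∧ (∀ k, b k / a k ≤ M) ∧
    (∀ k, ∀ x ∈ S k ⁻¹' closedBall 0 1, ∀ y ∈ S k ⁻¹' closedBall 0 1,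
      a k * dist x y ≤ dist (S k x) (S k y) ∧ dist (S k x) (S k y) ≤ b k * dist x y) ∧
    Tendsto (fun k => rhoH E (S k '' F)) atTop (nhds 0)

/-- `E` is a simple tangent to `F` with focal point `z`: the maps are homotheties
`S_k x = c_k • x + t_k` with `c_k > 0`, `c_k → ∞`, `ρ_H(E, S_k(F)) → 0`, and the blow-up
centres `S_k⁻¹(0) = -(c_k)⁻¹ • t_k` converge to `z`. -/
def IsSimpleTangentFocal {d : ℕ} (E F : Set (Euc d)) (z : Euc d) : Prop :=
  IsClosed E ∧ E.Nonempty ∧ E ⊆ closedBall 0 1 ∧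
  ∃ c : ℕ → ℝ, ∃ t : ℕ → Euc d,
    (∀ k, 0 < c k) ∧ Tendsto c atTop atTop ∧
    Tendsto (fun k => rhoH E ((fun x => c k • x + t k) '' F)) atTop (nhds 0) ∧
    Tendsto (fun k => (-(c k)⁻¹) • t k) atTop (nhds z)

/-!
Let `L = DΠ(z)` and `V = (ker L)ᗮ`. As `L` is injective on `V`, some linear automorphism `B`
of `ℝⁿ` satisfies `B ∘ L = π_V`. Put `w_k = S_k⁻¹(0)`, so that `S_k x = c_k (x - w_k)` and
`w_k → z`, and take the new blow-ups `S'_k y = c_k B(y - Π(w_k))`, which are bi-Lipschitz with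
constants proportional to `c_k`. If `e ∈ E` is close to `S_k x` with `x ∈ F`, then
`|x - w_k| = O(1/c_k)`, and strict differentiability of `Π` at `z` gives, uniformly in such `x`,
`S'_k(Π x) = π_V(S_k x) + c_k B(o(|x - w_k|)) = π_V(S_k x) + o(1)`,
so `π_V e` is close to `S'_k(Π(F))`.
-/

section Linear

variable {𝕜 E : Type*} [RCLike 𝕜] [NormedAddCommGroup E] [InnerProductSpace 𝕜 E]
  [FiniteDimensional 𝕜 E]

theorem LinearMap.apply_starProjection_orthogonal_ker (L : E →ₗ[𝕜] E) (x : E) :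
    L ((LinearMap.ker L)ᗮ.starProjection x) = L x := by
  have hx : x - (LinearMap.ker L)ᗮ.starProjection x ∈ LinearMap.ker L := by
    simpa only [Submodule.orthogonal_orthogonal] using
      (LinearMap.ker L)ᗮ.sub_starProjection_mem_orthogonal x
  rwa [LinearMap.mem_ker, map_sub, sub_eq_zero, eq_comm] at hx

-- Invert `L` on `(ker L)ᗮ` and extend the inverse to a linear automorphism of `E`.
theorem LinearMap.exists_continuousLinearEquiv_apply_eq_starProjection (L : E →ₗ[𝕜] E) :
    ∃ B : E ≃L[𝕜] E, ∀ x, B (L x) = (LinearMap.ker L)ᗮ.starProjection x := by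
  obtain ⟨A, hA⟩ := Submodule.exists_linearEquiv_restrict_eq
    (LinearEquiv.ofInjective _ <|
      L.injective_domRestrict_iff.2 (Submodule.orthogonal_disjoint _).symm)
  refine ⟨A.symm.toContinuousLinearEquiv, fun x => ?_⟩
  rw [← L.apply_starProjection_orthogonal_ker x, LinearEquiv.coe_toContinuousLinearEquiv',
    LinearEquiv.symm_apply_eq, Submodule.starProjection_apply, ← hA]
  rfl

end Linear

theorem rhoH_image_le {X Y Z : Type*} [PseudoEMetricSpace X] [PseudoEMetricSpace Z]
    {A : Set X} {S : Set Y} (φ : X → Z) (T : Y → X) (ψ : Y → Z) {η δ : ℝ≥0∞}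
    (hη : rhoH A (T '' S) < η)
    (h : ∀ a ∈ A, ∀ y ∈ S, edist a (T y) < η → edist (φ a) (ψ y) ≤ δ) :
    rhoH (φ '' A) (ψ '' S) ≤ δ := by
  refine iSup₂_le ?_
  rintro - ⟨a, ha, rfl⟩
  have ha' : Metric.infEDist a (T '' S) < η := (le_iSup₂ (f := fun a (_ : a ∈ A) =>
    Metric.infEDist a (T '' S)) a ha).trans_lt hη
  obtain ⟨-, ⟨y, hy, rfl⟩, hay⟩ := Metric.infEDist_lt_iff.1 ha'
  exact (Metric.infEDist_le_edist_of_mem (mem_image_of_mem ψ hy)).trans (h a ha y hy hay)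

section Analysis

variable {𝕜 E F : Type*} [NontriviallyNormedField 𝕜] [NormedAddCommGroup E] [NormedSpace 𝕜 E]
  [NormedAddCommGroup F] [NormedSpace 𝕜 F]

theorem HasStrictFDerivAt.eventually_norm_sub_le {f : E → F} {L : E →L[𝕜] F} {z : E}
    (hf : HasStrictFDerivAt f L z) {ι : Type*} {l : Filter ι} {w : ι → E} {r : ι → ℝ}
    (hw : Tendsto w l (𝓝 z)) (hr : Tendsto r l (𝓝 0)) {ε : ℝ} (hε : 0 < ε) :
    ∀ᶠ k in l, ∀ x ∈ closedBall (w k) (r k),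
      ‖f x - f (w k) - L (x - w k)‖ ≤ ε * ‖x - w k‖ := by
  have hfε := hf.isLittleO.def hε
  rw [nhds_prod_eq] at hfε
  obtain ⟨s, hs, hfs⟩ := (eventually_prod_self_iff
    (r := fun x y => ‖f x - f y - L (x - y)‖ ≤ ε * ‖x - y‖)).1 hfε
  obtain ⟨δ, hδ, hδs⟩ := Metric.mem_nhds_iff.1 hs
  filter_upwards [hw (ball_mem_nhds z (half_pos hδ)), hr (Iio_mem_nhds (half_pos hδ))]
    with k hwk hrk x hx
  have hwk' : dist (w k) z < δ / 2 := hwk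
  have hrk' : r k < δ / 2 := hrk
  refine hfs x (hδs ?_) (w k) (hδs (ball_subset_ball (half_le_self hδ.le) hwk'))
  rw [mem_closedBall] at hx
  rw [mem_ball]
  linarith [dist_triangle x (w k) z]

end Analysis

section Blowup

variable {E F G : Type*} [NormedAddCommGroup E] [NormedSpace ℝ E] [NormedAddCommGroup F]
  [NormedSpace ℝ F] [NormedAddCommGroup G] [NormedSpace ℝ G]

theorem dist_apply_smul_sub_le {P : E →L[ℝ] G} {B : F →L[ℝ] G} {L : E →L[ℝ] F}
    (hBL : ∀ x, B (L x) = P x) (f : E → F) {c : ℝ} (hc : 0 ≤ c) (a x w : E) :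
    dist (P a) (c • B (f x - f w)) ≤
      ‖P‖ * dist a (c • (x - w)) + ‖B‖ * (c * ‖f x - f w - L (x - w)‖) := by
  have hsplit : c • B (f x - f w) = P (c • (x - w)) + c • B (f x - f w - L (x - w)) := by
    rw [map_sub B (f x - f w), hBL, map_smul, smul_sub, add_sub_cancel]
  calc dist (P a) (c • B (f x - f w))
      ≤ dist (P a) (P (c • (x - w))) + ‖c • B (f x - f w - L (x - w))‖ := by
        rw [hsplit]
        exact (dist_triangle _ (P (c • (x - w))) _).trans_eq (by rw [dist_self_add_right])
    _ ≤ ‖P‖ * dist a (c • (x - w)) + ‖B‖ * (c * ‖f x - f w - L (x - w)‖) := by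
        rw [norm_smul, Real.norm_of_nonneg hc, mul_left_comm]
        gcongr
        · exact P.dist_le_opNorm _ _
        · exact B.le_opNorm _

variable {P : E →L[ℝ] G} {B : F →L[ℝ] G} {L : E →L[ℝ] F} {f : E → F} {z : E} {A S : Set E}
  {ι : Type*} {l : Filter ι} {c : ι → ℝ} {w : ι → E}

theorem eventually_rhoH_image_blowup_le (hBL : ∀ x, B (L x) = P x)
    (hf : HasStrictFDerivAt f L z) (hA : A ⊆ closedBall 0 1) (hc : Tendsto c l atTop)
    (hw : Tendsto w l (𝓝 z))
    (hAS : Tendsto (fun k => rhoH A ((fun x => c k • (x - w k)) '' S)) l (𝓝 0))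
    {η : ℝ} (hη0 : 0 < η) (hη1 : η ≤ 1) :
    ∀ᶠ k in l, rhoH (P '' A) ((fun y => c k • B (y - f (w k))) '' (f '' S)) ≤
      ENNReal.ofReal ((‖P‖ + 2 * ‖B‖) * η) := by
  filter_upwards [hAS.eventually_lt_const (ENNReal.ofReal_pos.2 hη0), hc.eventually_gt_atTop 0,
    hf.eventually_norm_sub_le hw (hc.const_div_atTop 2) hη0] with k hk hck hfk
  rw [image_image]
  refine rhoH_image_le P _ _ hk fun a ha x hx hax => ?_
  rw [edist_lt_ofReal] at hax
  have hcx : c k * ‖x - w k‖ ≤ 2 := by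
    have hy : ‖c k • (x - w k)‖ ≤ ‖a‖ + dist a (c k • (x - w k)) := by
      rw [dist_comm, dist_eq_norm]
      exact norm_le_norm_add_norm_sub' _ _
    rw [norm_smul, Real.norm_of_nonneg hck.le] at hy
    linarith [mem_closedBall_zero_iff.1 (hA ha)]
  have hx : x ∈ closedBall (w k) (2 / c k) := by
    rw [mem_closedBall, dist_eq_norm, le_div_iff₀ hck]
    linarith
  rw [edist_le_ofReal (by positivity)]
  calc dist (P a) (c k • B (f x - f (w k)))
      ≤ ‖P‖ * dist a (c k • (x - w k)) + ‖B‖ * (c k * ‖f x - f (w k) - L (x - w k)‖) :=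
        dist_apply_smul_sub_le hBL f hck.le a x (w k)
    _ ≤ ‖P‖ * η + ‖B‖ * (2 * η) := by
        gcongr ‖P‖ * ?_ + ‖B‖ * ?_
        calc c k * ‖f x - f (w k) - L (x - w k)‖ ≤ c k * (η * ‖x - w k‖) := by
              gcongr; exact hfk x hx
          _ = η * (c k * ‖x - w k‖) := by ring
          _ ≤ η * 2 := by gcongr
          _ = 2 * η := mul_comm η 2
    _ = (‖P‖ + 2 * ‖B‖) * η := by ring

theorem tendsto_rhoH_image_blowup (hBL : ∀ x, B (L x) = P x) (hf : HasStrictFDerivAt f L z)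
    (hA : A ⊆ closedBall 0 1) (hc : Tendsto c l atTop) (hw : Tendsto w l (𝓝 z))
    (hAS : Tendsto (fun k => rhoH A ((fun x => c k • (x - w k)) '' S)) l (𝓝 0)) :
    Tendsto (fun k => rhoH (P '' A) ((fun y => c k • B (y - f (w k))) '' (f '' S))) l (𝓝 0) := by
  refine ENNReal.tendsto_nhds_zero.2 fun ε hε => ?_
  obtain ⟨r, -, hr, hrε⟩ := ENNReal.lt_iff_exists_real_btwn.1 hε
  have hr0 : 0 < r := ENNReal.ofReal_pos.1 hr
  set C := ‖P‖ + 2 * ‖B‖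
  have hC : 0 < C + 1 := by positivity
  filter_upwards [eventually_rhoH_image_blowup_le hBL hf hA hc hw hAS
    (by positivity : 0 < min 1 (r / (C + 1))) (min_le_left _ _)] with k hk
  refine hk.trans ((ENNReal.ofReal_le_ofReal ?_).trans hrε.le)
  calc C * min 1 (r / (C + 1)) ≤ (C + 1) * (r / (C + 1)) := by
        gcongr
        · linarith
        · exact min_le_right _ _
    _ = r := mul_div_cancel₀ r hC.ne'

end Blowup

section Homothety

variable {E F : Type*} [NormedAddCommGroup E] [NormedSpace ℝ E] [NormedAddCommGroup F]
  [NormedSpace ℝ F] {c K : ℝ}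

theorem ContinuousLinearMap.dist_smul_apply_sub_le (B : E →L[ℝ] F) (hc : 0 ≤ c) (hK : ‖B‖ ≤ K)
    (p x y : E) : dist (c • B (x - p)) (c • B (y - p)) ≤ c * K * dist x y := by
  rw [dist_smul₀, Real.norm_of_nonneg hc, mul_assoc]
  gcongr
  calc dist (B (x - p)) (B (y - p)) ≤ ‖B‖ * dist (x - p) (y - p) := B.dist_le_opNorm _ _
    _ ≤ K * dist x y := by rw [dist_sub_right]; gcongr

theorem ContinuousLinearEquiv.le_dist_smul_apply_sub (B : E ≃L[ℝ] F) (hc : 0 ≤ c)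
    (hK : ‖(B.symm : F →L[ℝ] E)‖ ≤ K) (p x y : E) :
    c / K * dist x y ≤ dist (c • B (x - p)) (c • B (y - p)) := by
  have hxy : dist x y ≤ K * dist (B (x - p)) (B (y - p)) := by
    calc dist x y = dist (B.symm (B (x - p))) (B.symm (B (y - p))) := by simp
      _ ≤ ‖(B.symm : F →L[ℝ] E)‖ * dist (B (x - p)) (B (y - p)) :=
        (B.symm : F →L[ℝ] E).dist_le_opNorm _ _
      _ ≤ K * dist (B (x - p)) (B (y - p)) := by gcongr
  rw [dist_smul₀, Real.norm_of_nonneg hc]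
  have hK0 : 0 ≤ K := (norm_nonneg _).trans hK
  calc c / K * dist x y ≤ c / K * (K * dist (B (x - p)) (B (y - p))) := by
        gcongr
    _ = c * dist (B (x - p)) (B (y - p)) * (K / K) := by ring
    _ ≤ c * dist (B (x - p)) (B (y - p)) := mul_le_of_le_one_right (by positivity) (div_self_le_one K)

end Homothety

theorem isTangent_of_tendsto_rhoH_smul_apply_sub {d : ℕ} {E F : Set (Euc d)} (hEc : IsClosed E)
    (hEne : E.Nonempty) (hE : E ⊆ closedBall 0 1) (B : Euc d ≃L[ℝ] Euc d) {c : ℕ → ℝ}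
    (hc : ∀ k, 0 < c k) (p : ℕ → Euc d)
    (h : Tendsto (fun k => rhoH E ((fun y => c k • B (y - p k)) '' F)) atTop (𝓝 0)) :
    IsTangent E F := by
  -- `+ 1` keeps the constants positive when `d = 0`, where both operator norms vanish.
  set K := ‖(B : Euc d →L[ℝ] Euc d)‖ + 1
  set K' := ‖(B.symm : Euc d →L[ℝ] Euc d)‖ + 1
  have hK : 0 < K := by positivity
  have hK' : 0 < K' := by positivity
  refine ⟨hEc, hEne, hE, fun k y => c k • B (y - p k), fun k => c k / K', fun k => c k * K,
    K * K', fun k => div_pos (hc k) hK', fun k => mul_pos (hc k) hK, fun k => ?_,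
    fun k x _ y _ => ⟨?_, ?_⟩, h⟩
  · have := hc k
    exact le_of_eq (by field_simp)
  · exact B.le_dist_smul_apply_sub (hc k).le (le_add_of_nonneg_right zero_le_one) _ _ _
  · exact (B : Euc d →L[ℝ] Euc d).dist_smul_apply_sub_le (hc k).le
      (le_add_of_nonneg_right zero_le_one) _ _ _

theorem projection_of_tangent_isTangent_general {n : ℕ}
    (F : Set (Euc n))
    (E : Set (Euc n)) (z : Euc n) (hE : IsSimpleTangentFocal E F z)
    (Pi : Euc n → Euc n) (U : Set (Euc n)) (hU : IsOpen U) (hzU : z ∈ U)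
    (hdiff : ContDiffOn ℝ 1 Pi U) :
    IsTangent (projSet (LinearMap.ker (fderiv ℝ Pi z : Euc n →ₗ[ℝ] Euc n))ᗮ E) (Pi '' F) := by
  obtain ⟨hEc, hEne, hEball, c, t, hc, hcinf, hrho, hw⟩ := hE
  set V := (LinearMap.ker (fderiv ℝ Pi z : Euc n →ₗ[ℝ] Euc n))ᗮ
  set w := fun k => (-(c k)⁻¹) • t k
  have hT : ∀ k x, c k • x + t k = c k • (x - w k) := fun k x => by
    rw [smul_sub, smul_smul, mul_neg, mul_inv_cancel₀ (hc k).ne', neg_one_smul, sub_neg_eq_add]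
  simp only [hT] at hrho
  have hPi : HasStrictFDerivAt Pi (fderiv ℝ Pi z) z :=
    (hdiff.contDiffAt (hU.mem_nhds hzU)).hasStrictFDerivAt one_ne_zero
  obtain ⟨B, hB⟩ :=
    (fderiv ℝ Pi z : Euc n →ₗ[ℝ] Euc n).exists_continuousLinearEquiv_apply_eq_starProjection
  have hBL : ∀ x, (B : Euc n →L[ℝ] Euc n) (fderiv ℝ Pi z x) = V.starProjection x := hB
  have hproj : projSet V E = V.starProjection '' E := rfl
  rw [hproj]
  refine isTangent_of_tendsto_rhoH_smul_apply_sub ?_ (hEne.image _) ?_ B hc (fun k => Pi (w k)) ?_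
  · exact (((isCompact_closedBall 0 1).of_isClosed_subset hEc hEball).image
      V.starProjection.continuous).isClosed
  · rintro _ ⟨e, he, rfl⟩
    exact mem_closedBall_zero_iff.2
      ((V.norm_starProjection_apply_le e).trans (mem_closedBall_zero_iff.1 (hEball he)))
  · simpa only [ContinuousLinearEquiv.coe_coe] using
      tendsto_rhoH_image_blowup hBL hPi hEball hcinf hw hrho

/-- **Proposition 4.4**: orthogonal projections of simple tangents are tangents of
nonlinear projections. If `F ⊆ ℝⁿ` is non-empty and compact, `E` is a simple tangent to
`F` with focal point `z ∈ F`, and `Π` is `C¹` of constant rank `m ≥ 1` on an open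
neighbourhood of `z`, then `π_V(E)` is a tangent to `Π(F)` for `V = ker(J_z Π)ᗮ`. -/
theorem projection_of_tangent_isTangent {n m : ℕ} (hm : 1 ≤ m)
    (F : Set (Euc n)) (hFne : F.Nonempty) (hFc : IsCompact F)
    (E : Set (Euc n)) (z : Euc n) (hzF : z ∈ F) (hE : IsSimpleTangentFocal E F z)
    (Pi : Euc n → Euc n) (U : Set (Euc n)) (hU : IsOpen U) (hzU : z ∈ U)
    (hdiff : ContDiffOn ℝ 1 Pi U)
    (hrank : ∀ z' ∈ U, Module.finrank ℝ (LinearMap.range (fderiv ℝ Pi z' : Euc n →ₗ[ℝ] Euc n)) = m) :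
    IsTangent (projSet (LinearMap.ker (fderiv ℝ Pi z : Euc n →ₗ[ℝ] Euc n))ᗮ E) (Pi '' F) :=
  projection_of_tangent_isTangent_general F E z hE Pi U hU hzU hdiff

end
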